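/- arXiv:2505.16568 — 2 statements merged into one kernel-verified Lean document; each statement's English description precedes it below -/
import Mathlib

section
/- Let R be a commutative Noetherian ring and M a finitely generated R-module. If M is self-dual and 3-torsionfree, then Ext_R^1(M, R) = 0. -/
open CategoryTheory

universe u

variable (R : Type u) [CommRing R]

/-- Vanishing of `Ext_R^i(M, N)`. -/
def ExtVanishes (M N : Type u) [AddCommGroup M] [Module R M] [AddCommGroup N] [Module R N]
    (i : ℕ) : Prop :=
  Subsingleton (((Ext R (ModuleCat.{u} R) i).obj (Opposite.op (ModuleCat.of R M))).obj
    (ModuleCat.of R N))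

/-- `M` is self-dual: `M ≅ M^* = Hom_R(M, R)`. -/
def IsSelfDual (M : Type u) [AddCommGroup M] [Module R M] : Prop :=
  Nonempty (M ≃ₗ[R] (M →ₗ[R] R))

/-- `M` is `n`-torsionfree: for some (equivalently, any) finite free presentation
`F₁ → F₀ → M → 0` given by a matrix `A`, the Auslander transpose `Tr M`, i.e. the
cokernel of the dualized map (given by the transposed matrix `Aᵀ`), satisfies
`Ext_R^i(Tr M, R) = 0` for `i = 1, …, n`. -/
def IsNTorsionfree (n : ℕ) (M : Type u) [AddCommGroup M] [Module R M] : Prop :=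
  ∃ (p q : ℕ) (A : Matrix (Fin p) (Fin q) R),
    Nonempty (M ≃ₗ[R] ((Fin p → R) ⧸ LinearMap.range (Matrix.toLin' A))) ∧
    ∀ i, 1 ≤ i → i ≤ n →
      ExtVanishes R ((Fin q → R) ⧸ LinearMap.range (Matrix.toLin' A.transpose)) R i

/-- `M` is totally reflexive (Gorenstein projective): `M` is reflexive and
`Ext_R^i(M, R) = Ext_R^i(M^*, R) = 0` for all `i > 0`. -/
def IsTotallyReflexive (M : Type u) [AddCommGroup M] [Module R M] : Prop :=
  Module.IsReflexive R M ∧ (∀ i, 0 < i → ExtVanishes R M R i) ∧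
    (∀ i, 0 < i → ExtVanishes R (M →ₗ[R] R) R i)

/-- `N` is a syzygy `Ω M` of `M`: the kernel of a surjection `P → M` with `P`
finitely generated projective. -/
def IsSyzygyOf (N M : Type u) [AddCommGroup N] [Module R N] [AddCommGroup M] [Module R M] :
    Prop :=
  ∃ (P : Type u) (_ : AddCommGroup P) (_ : Module R P) (g : P →ₗ[R] M),
    Module.Projective R P ∧ Module.Finite R P ∧ Function.Surjective g ∧
      Nonempty (N ≃ₗ[R] LinearMap.ker g)

/-- `N` is an `n`-th syzygy `Ωⁿ M` of `M`. -/
def IsNthSyzygyOf (n : ℕ) (N M : Type u) [AddCommGroup N] [Module R N]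
    [AddCommGroup M] [Module R M] : Prop :=
  match n with
  | 0 => Nonempty (N ≃ₗ[R] M)
  | n + 1 => ∃ (K : Type u) (_ : AddCommGroup K) (_ : Module R K),
      IsSyzygyOf R K M ∧ IsNthSyzygyOf n N K

/-- Every finitely generated reflexive `R`-module is self-dual (property (sd)). -/
def SDProperty : Prop :=
  ∀ (M : Type u) (_ : AddCommGroup M) (_ : Module R M),
    Module.Finite R M → Module.IsReflexive R M → IsSelfDual R M

/-- The depth of a Noetherian local ring is at least `t`: there is an `R`-regular
sequence of length `t` inside the maximal ideal. -/
def DepthGE [IsLocalRing R] (t : ℕ) : Prop :=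
  ∃ rs : List R, rs.length = t ∧ (∀ r ∈ rs, r ∈ IsLocalRing.maximalIdeal R) ∧
    RingTheory.Sequence.IsRegular R rs

/-- The depth of a Noetherian local ring is at most `t`: every `R`-regular sequence
inside the maximal ideal has length at most `t`. -/
def DepthLE [IsLocalRing R] (t : ℕ) : Prop :=
  ∀ rs : List R, (∀ r ∈ rs, r ∈ IsLocalRing.maximalIdeal R) →
    RingTheory.Sequence.IsRegular R rs → rs.length ≤ t

/-- A local ring is Gorenstein if it has finite injective dimension over itself,
equivalently there is `n` such that `Ext_R^i(N, R) = 0` for all modules `N` and all `i > n`. -/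
def IsGorensteinLocalRing : Prop :=
  ∃ n : ℕ, ∀ (N : Type u) (_ : AddCommGroup N) (_ : Module R N), ∀ i, n < i →
    ExtVanishes R N R i

/-!
Write `M ≅ coker A` for a matrix `A`, so that `Tr M = coker Aᵀ`. Dualizing turns the cokernel
of `A` into the kernel of `Aᵀ`, so self-duality gives `M ≅ M^* ≅ ker Aᵀ`. The exact sequence
`0 → ker Aᵀ → Rᵖ → R^q → Tr M → 0` has free middle terms, so shifting dimension twice gives
`Ext¹(M, R) ≅ Ext¹(ker Aᵀ, R) ≅ Ext³(Tr M, R)`, which vanishes since `M` is 3-torsionfree.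
-/

namespace CategoryTheory.ProjectiveResolution

open Limits

variable {C : Type*} [Category C] [Abelian C]

noncomputable def augmentComplex {Z P : C} (Q : ProjectiveResolution Z) (f : Z ⟶ P) :
    ChainComplex C ℕ :=
  Q.complex.augment (Q.π.f 0 ≫ f) ((Q.complex_d_comp_π_f_zero_assoc f).trans zero_comp)

lemma augmentComplex_exactAt_succ {Z P : C} (Q : ProjectiveResolution Z) (f : Z ⟶ P) [Mono f]
    (n : ℕ) : (Q.augmentComplex f).ExactAt (n + 1) := by
  rw [HomologicalComplex.exactAt_iff' _ (n + 2) (n + 1) n (by simp) (by simp)]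
  match n with
  | 0 =>
    let φ : ShortComplex.mk _ _ Q.complex_d_comp_π_f_zero ⟶ (Q.augmentComplex f).sc' 2 1 0 :=
      ⟨𝟙 _, 𝟙 _, f, (Category.id_comp _).trans (Category.comp_id _).symm, Category.id_comp _⟩
    have : Epi φ.τ₁ := inferInstanceAs (Epi (𝟙 _))
    have : IsIso φ.τ₂ := inferInstanceAs (IsIso (𝟙 _))
    have : Mono φ.τ₃ := inferInstanceAs (Mono f)
    exact (ShortComplex.exact_iff_of_epi_of_isIso_of_mono φ).1 Q.exact₀
  | n + 1 => exact Q.exact_succ n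

noncomputable def ofShortExact {S : ShortComplex C} (hS : S.ShortExact) [Projective S.X₂]
    (Q : ProjectiveResolution S.X₁) : ProjectiveResolution S.X₃ where
  complex := Q.augmentComplex S.f
  projective
    | 0 => ‹Projective S.X₂›
    | n + 1 => Q.projective n
  π := (ChainComplex.toSingle₀Equiv _ _).symm
    ⟨S.g, (Category.assoc _ _ _).trans ((Q.π.f 0 ≫= S.zero).trans comp_zero)⟩
  quasiIso := ⟨fun n => by
    match n with
    | 0 =>
      rw [ChainComplex.quasiIsoAt₀_iff, ShortComplex.quasiIso_iff_of_zeros']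
      · let S' := ShortComplex.mk (Q.π.f 0 ≫ S.f) S.g
          ((Category.assoc _ _ _).trans ((Q.π.f 0 ≫= S.zero).trans comp_zero))
        let φ : S' ⟶ S := ⟨Q.π.f 0, 𝟙 _, 𝟙 _, by simp [S'], by simp [S']⟩
        have : Epi φ.τ₁ := inferInstanceAs (Epi (Q.π.f 0))
        refine (ShortComplex.exact_and_epi_g_iff_of_iso ?_).2
          ⟨(ShortComplex.exact_iff_of_epi_of_isIso_of_mono φ).2 hS.exact, hS.epi_g⟩
        exact ShortComplex.isoMk (Iso.refl _) (Iso.refl _) (Iso.refl _)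
          ((Category.id_comp _).trans (Category.comp_id _).symm)
          (by
            -- the objects of `augmentComplex` are those of `S` only after unfolding `augment`
            erw [Category.id_comp, Category.comp_id]
            exact (ChainComplex.toSingle₀Equiv_symm_apply_f_zero (C := Q.augmentComplex S.f)
              S.g _).symm)
      all_goals rfl
    | n + 1 =>
      have : Mono S.f := hS.mono_f
      rw [quasiIsoAt_iff_exactAt' _ _ (ChainComplex.exactAt_succ_single_obj _ _)]
      exact Q.augmentComplex_exactAt_succ S.f n⟩

end CategoryTheory.ProjectiveResolution

noncomputable def CategoryTheory.ShortComplex.ShortExact.extAddTwoIso {C : Type*} [Category C]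
    [Abelian C] {S : ShortComplex C} (hS : S.ShortExact) [Projective S.X₂] (R : Type*) [Ring R]
    [Linear R C] [EnoughProjectives C] (n : ℕ) (Y : C) :
    ((Ext R C (n + 2)).obj (Opposite.op S.X₃)).obj Y ≅
      ((Ext R C (n + 1)).obj (Opposite.op S.X₁)).obj Y :=
  let Q := ProjectiveResolution.of S.X₁
  (Q.ofShortExact hS).isoExt (n + 2) Y ≪≫
    HomologicalComplex.homologyIsoSc' _ (n + 1) (n + 2) (n + 3) (by simp) (by simp) ≪≫
    (HomologicalComplex.homologyIsoSc' (Q.complex.linearYonedaObj R Y) n (n + 1) (n + 2)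
      (by simp) (by simp)).symm ≪≫
    (Q.isoExt (n + 1) Y).symm

section ModuleCat

variable {R : Type u} [CommRing R]

theorem extVanishes_congr {M M' : Type u} [AddCommGroup M] [Module R M] [AddCommGroup M']
    [Module R M'] (e : M ≃ₗ[R] M') (N : Type u) [AddCommGroup N] [Module R N] (i : ℕ) :
    ExtVanishes R M N i ↔ ExtVanishes R M' N i :=
  (((Ext R (ModuleCat.{u} R) i).mapIso e.toModuleIso.op).app
    (ModuleCat.of R N)).toLinearEquiv.toEquiv.subsingleton_congr.symm

theorem extVanishes_add_two_iff_of_surjective {P X : Type u} [AddCommGroup P] [Module R P]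
    [Module.Projective R P] [AddCommGroup X] [Module R X] {g : P →ₗ[R] X}
    (hg : Function.Surjective g) (N : Type u) [AddCommGroup N] [Module R N] (n : ℕ) :
    ExtVanishes R X N (n + 2) ↔ ExtVanishes R (LinearMap.ker g) N (n + 1) := by
  have : Projective (ModuleCat.of R P) := (IsProjective.iff_projective P).1 ‹_›
  exact ((LinearMap.shortExact_shortComplexKer hg).extAddTwoIso R n
    (ModuleCat.of R N)).toLinearEquiv.toEquiv.subsingleton_congr

theorem extVanishes_quotient_range_add_three_iff {N₁ N₀ : Type u} [AddCommGroup N₁]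
    [Module R N₁] [Module.Projective R N₁] [AddCommGroup N₀] [Module R N₀]
    [Module.Projective R N₀] (f : N₁ →ₗ[R] N₀) (N : Type u) [AddCommGroup N] [Module R N]
    (n : ℕ) :
    ExtVanishes R (N₀ ⧸ LinearMap.range f) N (n + 3) ↔
      ExtVanishes R (LinearMap.ker f) N (n + 1) := by
  rw [extVanishes_add_two_iff_of_surjective (LinearMap.range f).mkQ_surjective,
    extVanishes_congr (LinearEquiv.ofEq _ _ (LinearMap.range f).ker_mkQ),
    extVanishes_add_two_iff_of_surjective f.surjective_rangeRestrict,
    extVanishes_congr (LinearEquiv.ofEq _ _ f.ker_rangeRestrict)]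

end ModuleCat

section Duality

variable {R : Type*} [CommRing R]

noncomputable def LinearMap.dualQuotientRangeEquivKerDualMap {N₁ N₀ : Type*} [AddCommGroup N₁]
    [Module R N₁] [AddCommGroup N₀] [Module R N₀] (f : N₁ →ₗ[R] N₀) :
    Module.Dual R (N₀ ⧸ LinearMap.range f) ≃ₗ[R] LinearMap.ker f.dualMap :=
  (LinearMap.range f).dualQuotEquivDualAnnihilator.trans
    (LinearEquiv.ofEq _ _ f.ker_dualMap_eq_dualAnnihilator_range.symm)

variable {m n : Type*} [Fintype m] [Fintype n] [DecidableEq m] [DecidableEq n]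

theorem Matrix.dualMap_toLin'_comp_dotProductEquiv (A : Matrix m n R) :
    (Matrix.toLin' A).dualMap ∘ₗ (dotProductEquiv R m).toLinearMap =
      (dotProductEquiv R n).toLinearMap ∘ₗ Matrix.toLin' A.transpose := by
  ext v w
  simp

noncomputable def Matrix.kerToLin'TransposeEquiv (A : Matrix m n R) :
    LinearMap.ker (Matrix.toLin' A.transpose) ≃ₗ[R] LinearMap.ker (Matrix.toLin' A).dualMap :=
  (dotProductEquiv R m).ofSubmodules _ _ <| by
    ext φ
    have h := LinearMap.congr_fun A.dualMap_toLin'_comp_dotProductEquiv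
      ((dotProductEquiv R m).symm φ)
    simp only [LinearMap.comp_apply, LinearEquiv.coe_coe, LinearEquiv.apply_symm_apply] at h
    rw [Submodule.mem_map_equiv, LinearMap.mem_ker, LinearMap.mem_ker, h,
      LinearEquiv.map_eq_zero_iff]

end Duality

theorem selfDual_threeTorsionfree_ext_one_vanishes_general
    (R : Type u) [CommRing R]
    (M : Type u) [AddCommGroup M] [Module R M]
    (hsd : IsSelfDual R M) (htf : IsNTorsionfree R 3 M) :
    ExtVanishes R M R 1 := by
  obtain ⟨p, q, A, ⟨e⟩, hTr⟩ := htf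
  obtain ⟨d⟩ := hsd
  have hM : M ≃ₗ[R] LinearMap.ker (Matrix.toLin' A.transpose) :=
    d ≪≫ₗ e.symm.dualMap ≪≫ₗ (Matrix.toLin' A).dualQuotientRangeEquivKerDualMap ≪≫ₗ
      A.kerToLin'TransposeEquiv.symm
  rw [extVanishes_congr hM]
  exact (extVanishes_quotient_range_add_three_iff (Matrix.toLin' A.transpose) R 0).1
    (hTr 3 (by norm_num) le_rfl)

/-- Let `R` be a commutative Noetherian ring and `M` a finitely generated `R`-module.
If `M` is self-dual and 3-torsionfree, then `Ext_R^1(M, R) = 0`. -/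
theorem selfDual_threeTorsionfree_ext_one_vanishes
    (R : Type u) [CommRing R] [IsNoetherianRing R]
    (M : Type u) [AddCommGroup M] [Module R M] [Module.Finite R M]
    (hsd : IsSelfDual R M) (htf : IsNTorsionfree R 3 M) :
    ExtVanishes R M R 1 :=
  selfDual_threeTorsionfree_ext_one_vanishes_general R M hsd htf
end

section
/- Let R be a commutative Noetherian ring and M a finitely generated self-dual R-module. Then M is totally reflexive if and only if Ext_R^i(M, R) = 0 for all i > 0. -/
/-!
Self-duality `σ : M ≃ M^*` gives `Ext^i(M^*, R) ≅ Ext^i(M, R)`, so only reflexivity needs an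
argument. The transpose of `σ` yields a left inverse `M^** → M` of the evaluation map; it is a
surjection between the isomorphic finitely generated modules `M^** ≅ M`, hence bijective by
Vasconcelos' theorem, and so is the evaluation map.
-/

open CategoryTheory

universe u

variable (R : Type u) [CommRing R]

theorem ExtVanishes.of_linearEquiv {R : Type u} [CommRing R] {M N P : Type u}
    [AddCommGroup M] [Module R M] [AddCommGroup N] [Module R N] [AddCommGroup P] [Module R P]
    {i : ℕ} (h : ExtVanishes R M P i) (e : M ≃ₗ[R] N) : ExtVanishes R N P i :=
  have : Subsingleton (((Ext R (ModuleCat.{u} R) i).obj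
      (Opposite.op (ModuleCat.of R M))).obj (ModuleCat.of R P)) := h
  ((forget (ModuleCat R)).mapIso
    (((Ext R (ModuleCat.{u} R) i).mapIso e.toModuleIso.op).app (ModuleCat.of R P))).toEquiv
    |>.subsingleton

namespace Module.IsReflexive

variable {R M : Type*} [CommRing R] [AddCommGroup M] [Module R M] [Module.Finite R M]

theorem of_leftInverse_dual_eval (e : Dual R (Dual R M) ≃ₗ[R] M)
    (r : Dual R (Dual R M) →ₗ[R] M) (hr : Function.LeftInverse r (Dual.eval R M)) :
    IsReflexive R M := by
  have r_injective : Function.Injective r :=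
    OrzechProperty.injective_of_surjective_of_injective e.toLinearMap r e.injective
      hr.surjective
  exact ⟨hr.injective, (hr.rightInverse_of_injective r_injective).surjective⟩

theorem of_linearEquiv_dual (σ : M ≃ₗ[R] Dual R M) : IsReflexive R M := by
  refine of_leftInverse_dual_eval (σ.dualMap.trans σ.symm)
    (σ.symm.toLinearMap ∘ₗ σ.toLinearMap.flip.dualMap) fun m => ?_
  have flip_dualMap_eval : σ.toLinearMap.flip.dualMap (Dual.eval R M m) = σ m := by
    ext x
    simp
  simp [flip_dualMap_eval]

end Module.IsReflexive

theorem selfDual_totallyReflexive_iff_ext_vanishes_general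
    (R : Type u) [CommRing R]
    (M : Type u) [AddCommGroup M] [Module R M] [Module.Finite R M]
    (hsd : IsSelfDual R M) :
    IsTotallyReflexive R M ↔ ∀ i, 0 < i → ExtVanishes R M R i := by
  obtain ⟨σ⟩ := hsd
  exact ⟨fun h => h.2.1, fun h =>
    ⟨.of_linearEquiv_dual σ, h, fun i hi => (h i hi).of_linearEquiv σ⟩⟩

/-- A finitely generated self-dual module over a commutative Noetherian ring is totally
reflexive iff `Ext_R^i(M, R) = 0` for all `i > 0`. -/
theorem selfDual_totallyReflexive_iff_ext_vanishes
    (R : Type u) [CommRing R] [IsNoetherianRing R]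
    (M : Type u) [AddCommGroup M] [Module R M] [Module.Finite R M]
    (hsd : IsSelfDual R M) :
    IsTotallyReflexive R M ↔ ∀ i, 0 < i → ExtVanishes R M R i :=
  selfDual_totallyReflexive_iff_ext_vanishes_general R M hsd
end
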